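/- Let M be a real symmetric n×n matrix indexed by the vertices of a connected graph G with exactly one negative eigenvalue of multiplicity one, negative entries on edges and zero elsewhere off-diagonal. If x ∈ ker(M) is nonzero and G[supp_+(x)] is disconnected, then for every connected component C of G[supp(x)], N(C) = N(supp(x)), and there is no edge of G between supp_+(x) and supp_-(x). -/

import Mathlib

open Matrix Set

variable {V : Type*} [Fintype V] [DecidableEq V]

/-- Positive support of a vector. -/
def posSupp (x : V → ℝ) : Set V := {v | 0 < x v}

/-- Negative support of a vector. -/
def negSupp (x : V → ℝ) : Set V := {v | x v < 0}

/-- Support of a vector. -/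
def supp (x : V → ℝ) : Set V := {v | x v ≠ 0}

/-- External neighborhood of a set of vertices. -/
def nbhd (G : SimpleGraph V) (S : Set V) : Set V := {v | v ∉ S ∧ ∃ u ∈ S, G.Adj u v}

/-- Number of connected components of the subgraph induced by `S`. -/
noncomputable def compCount (G : SimpleGraph V) (S : Set V) : ℕ :=
  Nat.card (G.induce S).ConnectedComponent

/-- `C` is (the vertex set of) a connected component of the subgraph induced by `S`. -/
def IsComponentOf (G : SimpleGraph V) (S C : Set V) : Prop :=
  ∃ K : (G.induce S).ConnectedComponent, C = Subtype.val '' K.supp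

/-- `M ∈ M(G)`: a real symmetric matrix with exactly one negative eigenvalue
(counted with multiplicity), negative entries on edges and zero off-diagonal
entries on non-edges. -/
structure CdVMatrix (G : SimpleGraph V) (M : Matrix V V ℝ) : Prop where
  herm : M.IsHermitian
  edge_neg : ∀ u v, G.Adj u v → M u v < 0
  nonedge_zero : ∀ u v, u ≠ v → ¬ G.Adj u v → M u v = 0
  one_neg : {i | herm.eigenvalues i < 0}.ncard = 1

/-- Semivalid representation of a graph: conditions (i)-(iv). -/
def Semivalid (G : SimpleGraph V) (L : Submodule ℝ (V → ℝ)) : Prop :=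
  ∀ x ∈ L, x ≠ 0 →
    ((posSupp x).Nonempty ∧ (negSupp x).Nonempty) ∧
    ((G.induce (posSupp x)).Connected ∨
      (compCount G (posSupp x) = 2 ∧ (G.induce (negSupp x)).Connected)) ∧
    ((∀ y ∈ L, y ≠ 0 → supp y ⊆ supp x → supp y = supp x) →
      (G.induce (posSupp x)).Connected ∧ (G.induce (negSupp x)).Connected) ∧
    (¬ (G.induce (posSupp x)).Connected →
      (∀ u ∈ posSupp x, ∀ v ∈ negSupp x, ¬ G.Adj u v) ∧
      (∀ C : Set V, IsComponentOf G (supp x) C → nbhd G C = nbhd G (supp x)))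

/-- The sign-pattern cone of `x` in `L` (a relatively open cone of the fan `P(L)`). -/
def signCone (L : Submodule ℝ (V → ℝ)) (x : V → ℝ) : Set (V → ℝ) :=
  {y | y ∈ L ∧ posSupp y = posSupp x ∧ negSupp y = negSupp x}

/-- The dimension of the cone of `x`, i.e. the dimension of its linear span. -/
noncomputable def coneDim (L : Submodule ℝ (V → ℝ)) (x : V → ℝ) : ℕ :=
  Module.finrank ℝ (Submodule.span ℝ (signCone L x))

/-- The graph parameter η: maximal dimension of a semivalid representation. -/
noncomputable def etaParam (G : SimpleGraph V) : ℕ :=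
  sSup {n | ∃ L : Submodule ℝ (V → ℝ), Semivalid G L ∧ Module.finrank ℝ L = n}

/-- Valid representation of a graph. -/
def Valid (G : SimpleGraph V) (X : Submodule ℝ (V → ℝ)) : Prop :=
  ∀ x ∈ X, x ≠ 0 → (G.induce (posSupp x)).Connected

/-- The graph parameter λ: maximal dimension of a valid representation. -/
noncomputable def lambdaParam (G : SimpleGraph V) : ℕ :=
  sSup {n | ∃ X : Submodule ℝ (V → ℝ), Valid G X ∧ Module.finrank ℝ X = n}

/-- The Strong Arnold hypothesis. -/
def SAH (G : SimpleGraph V) (M : Matrix V V ℝ) : Prop :=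
  ∀ X : Matrix V V ℝ, X.IsSymm → (∀ u v, (u = v ∨ G.Adj u v) → X u v = 0) →
    M * X = 0 → X = 0

/-- The Colin de Verdière parameter μ. -/
noncomputable def muParam (G : SimpleGraph V) : ℕ :=
  sSup {n | ∃ M : Matrix V V ℝ, CdVMatrix G M ∧ SAH G M ∧
    Module.finrank ℝ (LinearMap.ker M.mulVecLin) = n}

/-!
Because `M` has exactly one negative eigenvalue, the Perron–Frobenius argument (`|φ|` has no
larger Rayleigh quotient than the ground state `φ`, so it is again a ground state, and it cannot
vanish anywhere on a connected graph) yields a positive vector `ψ` such that `M` is positive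
semidefinite on `ψ⊥` and every isotropic vector of `ψ⊥` lies in `ker M`. Consequently, if `a, b`
have nonpositive quadratic forms and vanishing cross term, then `(ψ ⬝ b) a - (ψ ⬝ a) b ∈ ker M`.

Take `a, b` to be the restrictions of `x` to a component of `G[supp₊ x]` and to the rest of
`supp₊ x`: evaluating at a vertex of the first with a neighbour in `supp₋ x` gives a sign
contradiction, so there are no such edges. Then every component of `G[supp x]` has constant sign,
and taking `a, b` to be the restrictions of `x` to two such components `K, K'` and evaluating
outside `supp x` shows that a vertex has a neighbour in `K` iff it has one in `K'`.
-/

section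

variable {W : Type*}

lemma SimpleGraph.Reachable.mem_of_forall_adj {H : SimpleGraph W} {S : Set W}
    (hS : ∀ a b, H.Adj a b → a ∈ S → b ∈ S) {a b : W} (h : H.Reachable a b) (ha : a ∈ S) :
    b ∈ S := by
  obtain ⟨p⟩ := h
  induction p with
  | nil => exact ha
  | cons hadj _ ih => exact ih (hS _ _ hadj ha)

def SimpleGraph.IsAdjClosedIn (G : SimpleGraph W) (A C : Set W) : Prop :=
  C ⊆ A ∧ ∀ u ∈ C, ∀ w ∈ A, G.Adj u w → w ∈ C

namespace SimpleGraph

variable {G : SimpleGraph W} {A C : Set W}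

lemma IsAdjClosedIn.diff (hC : G.IsAdjClosedIn A C) : G.IsAdjClosedIn A (A \ C) :=
  ⟨sdiff_subset, fun u hu w hw hadj ↦ ⟨hw, fun hwC ↦ hu.2 (hC.2 w hwC u hu.1 hadj.symm)⟩⟩

lemma isAdjClosedIn_image_supp (K : (G.induce A).ConnectedComponent) :
    G.IsAdjClosedIn A (Subtype.val '' K.supp) := by
  refine ⟨fun _ ⟨u, _, hu⟩ ↦ hu ▸ u.2, ?_⟩
  rintro _ ⟨u, huK, rfl⟩ w hw hadj
  refine ⟨⟨w, hw⟩, ?_, rfl⟩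
  rw [ConnectedComponent.mem_supp_iff] at huK ⊢
  rw [← huK]
  exact ConnectedComponent.sound (induce_adj.mpr hadj.symm).reachable

lemma IsAdjClosedIn.image_supp_subset (hC : G.IsAdjClosedIn A C)
    (K : (G.induce A).ConnectedComponent) {u : W} (hu : u ∈ Subtype.val '' K.supp) (huC : u ∈ C) :
    Subtype.val '' K.supp ⊆ C := by
  obtain ⟨u, huK, rfl⟩ := hu
  rintro _ ⟨w, hwK, rfl⟩
  rw [ConnectedComponent.mem_supp_iff] at huK hwK
  exact (ConnectedComponent.exact (huK.trans hwK.symm)).mem_of_forall_adj (S := {a : A | a.1 ∈ C})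
    (fun a b hab ha ↦ hC.2 a ha b b.2 hab) huC

lemma exists_isAdjClosedIn_of_not_connected (h : ¬(G.induce A).Connected) {u : W} (hu : u ∈ A) :
    ∃ C, G.IsAdjClosedIn A C ∧ u ∈ C ∧ (A \ C).Nonempty := by
  rw [connected_iff_exists_forall_reachable] at h
  push Not at h
  obtain ⟨w, hw⟩ := h ⟨u, hu⟩
  refine ⟨_, isAdjClosedIn_image_supp ((G.induce A).connectedComponentMk ⟨u, hu⟩),
    ⟨⟨u, hu⟩, rfl, rfl⟩, w, w.2, ?_⟩
  rintro ⟨w', hw'K, hw'w⟩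
  obtain rfl : w' = w := Subtype.ext hw'w
  exact hw (ConnectedComponent.exact hw'K).symm

lemma IsAdjClosedIn.nbhd_subset (hC : G.IsAdjClosedIn A C) : nbhd G C ⊆ nbhd G A :=
  fun v ⟨hvC, u, huC, hadj⟩ ↦ ⟨fun hvA ↦ hvC (hC.2 u huC v hvA hadj), u, hC.1 huC, hadj⟩

end SimpleGraph

lemma image_supp_subset_posSupp_or_negSupp {G : SimpleGraph W} {x : W → ℝ}
    (hno : ∀ u ∈ posSupp x, ∀ v ∈ negSupp x, ¬G.Adj u v)
    (K : (G.induce (supp x)).ConnectedComponent) :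
    Subtype.val '' K.supp ⊆ posSupp x ∨ Subtype.val '' K.supp ⊆ negSupp x := by
  have hpos : G.IsAdjClosedIn (supp x) (posSupp x) :=
    ⟨fun _ hv ↦ hv.ne', fun u hu w hw hadj ↦
      (lt_or_gt_of_ne hw).resolve_left fun hneg ↦ hno u hu w hneg hadj⟩
  have hneg : G.IsAdjClosedIn (supp x) (negSupp x) :=
    ⟨fun _ hv ↦ hv.ne, fun u hu w hw hadj ↦
      (lt_or_gt_of_ne hw).resolve_right fun hpos ↦ hno w hpos u hu hadj.symm⟩
  obtain ⟨r, rfl⟩ := K.exists_rep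
  have hr : r.1 ∈ Subtype.val '' ((G.induce (supp x)).connectedComponentMk r).supp :=
    ⟨r, rfl, rfl⟩
  rcases lt_or_gt_of_ne r.2 with h | h
  · exact .inr (hneg.image_supp_subset _ hr h)
  · exact .inl (hpos.image_supp_subset _ hr h)

end

section

variable {W : Type*} [Fintype W]

lemma dotProduct_mulVec_abs_le {M : Matrix W W ℝ} (hoff : ∀ u v, u ≠ v → M u v ≤ 0)
    (y : W → ℝ) : |y| ⬝ᵥ M *ᵥ |y| ≤ y ⬝ᵥ M *ᵥ y := by
  simp only [dotProduct, mulVec, Finset.mul_sum]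
  refine Finset.sum_le_sum fun v _ ↦ Finset.sum_le_sum fun u _ ↦ ?_
  rcases eq_or_ne v u with rfl | hvu
  · exact le_of_eq (by simp only [Pi.abs_apply]; linear_combination M v v * abs_mul_abs_self (y v))
  · have : y v * y u ≤ |y| v * |y| u := by
      simpa only [Pi.abs_apply, abs_mul] using le_abs_self (y v * y u)
    nlinarith [mul_le_mul_of_nonpos_left this (hoff v u hvu)]

lemma Matrix.IsSymm.mulVec_smul_sub_smul_eq_zero {M : Matrix W W ℝ} (hM : M.IsSymm)
    {ψ : W → ℝ}
    (hψ : ∀ y, ψ ⬝ᵥ y = 0 → 0 ≤ y ⬝ᵥ M *ᵥ y ∧ (y ⬝ᵥ M *ᵥ y = 0 → M *ᵥ y = 0))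
    {a b : W → ℝ} (ha : a ⬝ᵥ M *ᵥ a ≤ 0) (hb : b ⬝ᵥ M *ᵥ b ≤ 0) (hab : a ⬝ᵥ M *ᵥ b = 0) :
    M *ᵥ ((ψ ⬝ᵥ b) • a - (ψ ⬝ᵥ a) • b) = 0 := by
  have hba : b ⬝ᵥ M *ᵥ a = 0 := by rw [← hM.eq, dotProduct_transpose_mulVec, hab]
  set w := (ψ ⬝ᵥ b) • a - (ψ ⬝ᵥ a) • b
  have hw : ψ ⬝ᵥ w = 0 := by
    simp only [w, dotProduct_sub, dotProduct_smul, smul_eq_mul]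
    ring
  have hq : w ⬝ᵥ M *ᵥ w =
      (ψ ⬝ᵥ b) ^ 2 * (a ⬝ᵥ M *ᵥ a) + (ψ ⬝ᵥ a) ^ 2 * (b ⬝ᵥ M *ᵥ b) := by
    simp only [w, mulVec_sub, mulVec_smul, dotProduct_sub, sub_dotProduct, dotProduct_smul,
      smul_dotProduct, smul_eq_mul, hab, hba]
    ring
  refine (hψ w hw).2 (le_antisymm ?_ (hψ w hw).1)
  rw [hq]
  nlinarith [mul_nonpos_of_nonneg_of_nonpos (sq_nonneg (ψ ⬝ᵥ b)) ha,
    mul_nonpos_of_nonneg_of_nonpos (sq_nonneg (ψ ⬝ᵥ a)) hb]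

lemma Matrix.mulVec_indicator_apply_eq_neg {M : Matrix W W ℝ} {x : W → ℝ} (hker : M *ᵥ x = 0)
    (C : Set W) (v : W) :
    (M *ᵥ C.indicator x) v = -(M *ᵥ Cᶜ.indicator x) v := by
  have := congrFun hker v
  rw [← Set.indicator_self_add_compl C x, mulVec_add] at this
  exact eq_neg_of_add_eq_zero_left this

lemma dotProduct_indicator_pos {ψ x : W → ℝ} (hψ : ∀ v, 0 < ψ v) {C : Set W}
    (hC : C ⊆ posSupp x) (hne : C.Nonempty) : 0 < ψ ⬝ᵥ C.indicator x := by
  have hterm : ∀ v, 0 ≤ ψ v * C.indicator x v := fun v ↦ by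
    by_cases hv : v ∈ C
    · simpa [hv] using mul_nonneg (hψ v).le (hC hv).le
    · simp [hv]
  obtain ⟨v, hv⟩ := hne
  exact Finset.sum_pos' (fun v _ ↦ hterm v)
    ⟨v, Finset.mem_univ v, by simpa [hv] using mul_pos (hψ v) (hC hv)⟩

lemma dotProduct_indicator_ne_zero {ψ x : W → ℝ} (hψ : ∀ v, 0 < ψ v) {C : Set W}
    (hC : C ⊆ posSupp x ∨ C ⊆ negSupp x) (hne : C.Nonempty) : ψ ⬝ᵥ C.indicator x ≠ 0 := by
  rcases hC with hC | hC
  · exact (dotProduct_indicator_pos hψ hC hne).ne'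
  · have := dotProduct_indicator_pos (x := -x) hψ
      (fun v hv ↦ show 0 < -x v from neg_pos.mpr (hC hv)) hne
    rw [Set.indicator_neg', dotProduct_neg] at this
    exact (neg_pos.mp this).ne

end

namespace Matrix.IsHermitian

variable {M : Matrix V V ℝ} (hH : M.IsHermitian)

lemma dotProduct_eq_sum_repr (y z : V → ℝ) :
    y ⬝ᵥ z = ∑ i, hH.eigenvectorBasis.repr (WithLp.toLp 2 y) i *
      hH.eigenvectorBasis.repr (WithLp.toLp 2 z) i := by
  have := hH.eigenvectorBasis.repr.inner_map_map (WithLp.toLp 2 z) (WithLp.toLp 2 y)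
  simp only [PiLp.inner_apply, RCLike.inner_apply, conj_trivial] at this
  exact this.symm

lemma repr_mulVec (y : V → ℝ) (i : V) :
    hH.eigenvectorBasis.repr (WithLp.toLp 2 (M *ᵥ y)) i =
      hH.eigenvalues i * hH.eigenvectorBasis.repr (WithLp.toLp 2 y) i := by
  simp only [OrthonormalBasis.repr_apply_apply, EuclideanSpace.inner_eq_star_dotProduct,
    star_trivial]
  rw [dotProduct_comm, ← dotProduct_transpose_mulVec, isHermitian_iff_isSymm.mp hH,
    hH.mulVec_eigenvectorBasis, dotProduct_smul, smul_eq_mul, dotProduct_comm]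

lemma dotProduct_mulVec_eq_sum (y : V → ℝ) :
    y ⬝ᵥ M *ᵥ y = ∑ i, hH.eigenvalues i * hH.eigenvectorBasis.repr (WithLp.toLp 2 y) i ^ 2 := by
  simp only [hH.dotProduct_eq_sum_repr y, hH.repr_mulVec]
  exact Finset.sum_congr rfl fun i _ ↦ by ring

lemma dotProduct_self_eq_sum (y : V → ℝ) :
    y ⬝ᵥ y = ∑ i, hH.eigenvectorBasis.repr (WithLp.toLp 2 y) i ^ 2 := by
  simp only [hH.dotProduct_eq_sum_repr y, sq]

lemma mulVec_eq_iff (y z : V → ℝ) :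
    M *ᵥ y = z ↔ ∀ i, hH.eigenvalues i * hH.eigenvectorBasis.repr (WithLp.toLp 2 y) i =
      hH.eigenvectorBasis.repr (WithLp.toLp 2 z) i := by
  simp only [← hH.repr_mulVec]
  refine ⟨fun h i ↦ by rw [h], fun h ↦ WithLp.toLp_injective 2 ?_⟩
  exact hH.eigenvectorBasis.repr.injective (PiLp.ext h)

lemma mulVec_eq_zero_iff (y : V → ℝ) :
    M *ᵥ y = 0 ↔ ∀ i, hH.eigenvalues i * hH.eigenvectorBasis.repr (WithLp.toLp 2 y) i = 0 := by
  simp [hH.mulVec_eq_iff]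

lemma mulVec_eq_smul_iff (y : V → ℝ) (μ : ℝ) :
    M *ᵥ y = μ • y ↔
      ∀ i, (hH.eigenvalues i - μ) * hH.eigenvectorBasis.repr (WithLp.toLp 2 y) i = 0 := by
  simp [hH.mulVec_eq_iff, sub_mul, sub_eq_zero]

variable {i₀ : V}

lemma eigenvalue_mul_dotProduct_self_le (hmin : ∀ i, hH.eigenvalues i₀ ≤ hH.eigenvalues i)
    (y : V → ℝ) : hH.eigenvalues i₀ * (y ⬝ᵥ y) ≤ y ⬝ᵥ M *ᵥ y := by
  rw [hH.dotProduct_self_eq_sum, hH.dotProduct_mulVec_eq_sum, Finset.mul_sum]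
  exact Finset.sum_le_sum fun i _ ↦ mul_le_mul_of_nonneg_right (hmin i) (sq_nonneg _)

lemma mulVec_eq_smul_of_dotProduct_mulVec_eq (hmin : ∀ i, hH.eigenvalues i₀ ≤ hH.eigenvalues i)
    {y : V → ℝ} (hy : y ⬝ᵥ M *ᵥ y = hH.eigenvalues i₀ * (y ⬝ᵥ y)) :
    M *ᵥ y = hH.eigenvalues i₀ • y := by
  have hsum : ∑ i, (hH.eigenvalues i - hH.eigenvalues i₀) *
      hH.eigenvectorBasis.repr (WithLp.toLp 2 y) i ^ 2 = 0 := by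
    simp only [sub_mul, Finset.sum_sub_distrib, ← Finset.mul_sum, ← hH.dotProduct_self_eq_sum,
      ← hH.dotProduct_mulVec_eq_sum, hy, sub_self]
  rw [Finset.sum_eq_zero_iff_of_nonneg fun i _ ↦
    mul_nonneg (sub_nonneg.mpr (hmin i)) (sq_nonneg _)] at hsum
  refine (hH.mulVec_eq_smul_iff y _).mpr fun i ↦ ?_
  rcases mul_eq_zero.mp (hsum i (Finset.mem_univ i)) with h | h <;> simp_all

lemma repr_eq_zero_of_dotProduct_eq_zero
    (hsimple : ∀ i ≠ i₀, hH.eigenvalues i ≠ hH.eigenvalues i₀) {ψ y : V → ℝ}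
    (hψ : M *ᵥ ψ = hH.eigenvalues i₀ • ψ) (hψ0 : ψ ≠ 0) (hy : ψ ⬝ᵥ y = 0) :
    hH.eigenvectorBasis.repr (WithLp.toLp 2 y) i₀ = 0 := by
  have hcoeff : ∀ i ≠ i₀, hH.eigenvectorBasis.repr (WithLp.toLp 2 ψ) i = 0 := fun i hi ↦
    (mul_eq_zero.mp ((hH.mulVec_eq_smul_iff ψ _).mp hψ i)).resolve_left
      (sub_ne_zero.mpr (hsimple i hi))
  have hsingle : ∀ z : V → ℝ, ψ ⬝ᵥ z = hH.eigenvectorBasis.repr (WithLp.toLp 2 ψ) i₀ *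
      hH.eigenvectorBasis.repr (WithLp.toLp 2 z) i₀ := fun z ↦ by
    rw [hH.dotProduct_eq_sum_repr, Finset.sum_eq_single i₀ (fun i _ hi ↦ by simp [hcoeff i hi])
      (by simp)]
  have hψ₀ : hH.eigenvectorBasis.repr (WithLp.toLp 2 ψ) i₀ ≠ 0 := fun h ↦
    hψ0 (dotProduct_self_eq_zero.mp (by rw [hsingle, h, zero_mul]))
  rw [hsingle] at hy
  exact (mul_eq_zero.mp hy).resolve_left hψ₀

lemma dotProduct_mulVec_nonneg_of_repr_eq_zero (hnonneg : ∀ i ≠ i₀, 0 ≤ hH.eigenvalues i)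
    {y : V → ℝ} (hy : hH.eigenvectorBasis.repr (WithLp.toLp 2 y) i₀ = 0) :
    0 ≤ y ⬝ᵥ M *ᵥ y ∧ (y ⬝ᵥ M *ᵥ y = 0 → M *ᵥ y = 0) := by
  have hterm : ∀ i ∈ Finset.univ,
      0 ≤ hH.eigenvalues i * hH.eigenvectorBasis.repr (WithLp.toLp 2 y) i ^ 2 := fun i _ ↦ by
    rcases eq_or_ne i i₀ with rfl | hi
    · simp [hy]
    · exact mul_nonneg (hnonneg i hi) (sq_nonneg _)
  rw [hH.dotProduct_mulVec_eq_sum, Finset.sum_eq_zero_iff_of_nonneg hterm]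
  refine ⟨Finset.sum_nonneg hterm, fun h ↦ (hH.mulVec_eq_zero_iff y).mpr fun i ↦ ?_⟩
  rcases mul_eq_zero.mp (h i (Finset.mem_univ i)) with h | h <;> simp_all

end Matrix.IsHermitian

namespace CdVMatrix

variable {G : SimpleGraph V} {M : Matrix V V ℝ}

lemma apply_nonpos (hM : CdVMatrix G M) {u v : V} (huv : u ≠ v) : M u v ≤ 0 := by
  by_cases h : G.Adj u v
  · exact (hM.edge_neg u v h).le
  · exact (hM.nonedge_zero u v huv h).le

lemma pos_of_mulVec_eq_smul (hG : G.Connected) (hM : CdVMatrix G M) {y : V → ℝ} {μ : ℝ}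
    (hy : 0 ≤ y) (hy0 : y ≠ 0) (hMy : M *ᵥ y = μ • y) (v : V) : 0 < y v := by
  have hzero : ∀ a b, G.Adj a b → a ∈ {w | y w = 0} → b ∈ {w | y w = 0} := by
    intro a b hab ha
    have hrow : ∑ u, M a u * y u = 0 := by
      have := congrFun hMy a
      rwa [Pi.smul_apply, smul_eq_mul, show y a = 0 from ha, mul_zero] at this
    have hterm : ∀ u ∈ Finset.univ, M a u * y u ≤ 0 := fun u _ ↦ by
      rcases eq_or_ne a u with rfl | hau
      · rw [show y a = 0 from ha, mul_zero]
      · exact mul_nonpos_of_nonpos_of_nonneg (hM.apply_nonpos hau) (hy u)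
    have := (Finset.sum_eq_zero_iff_of_nonpos hterm).mp hrow b (Finset.mem_univ b)
    exact (mul_eq_zero.mp this).resolve_left (hM.edge_neg a b hab).ne
  refine (hy v).lt_of_ne fun hv ↦ hy0 (funext fun w ↦ ?_)
  exact (hG.preconnected v w).mem_of_forall_adj hzero hv.symm

lemma exists_eigenvalue_neg_forall_ne_nonneg (hM : CdVMatrix G M) :
    ∃ i₀, hM.herm.eigenvalues i₀ < 0 ∧ ∀ i ≠ i₀, 0 ≤ hM.herm.eigenvalues i := by
  obtain ⟨i₀, hi₀⟩ := Set.ncard_eq_one.mp hM.one_neg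
  refine ⟨i₀, (Set.ext_iff.mp hi₀ i₀).mpr rfl, fun i hi ↦ not_lt.mp fun hneg ↦ hi ?_⟩
  exact (Set.ext_iff.mp hi₀ i).mp hneg

theorem exists_pos_groundState (hG : G.Connected) (hM : CdVMatrix G M) :
    ∃ ψ : V → ℝ, (∀ v, 0 < ψ v) ∧
      ∀ y, ψ ⬝ᵥ y = 0 → 0 ≤ y ⬝ᵥ M *ᵥ y ∧ (y ⬝ᵥ M *ᵥ y = 0 → M *ᵥ y = 0) := by
  set hH := hM.herm
  obtain ⟨i₀, hneg, hnonneg⟩ := hM.exists_eigenvalue_neg_forall_ne_nonneg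
  have hmin : ∀ i, hH.eigenvalues i₀ ≤ hH.eigenvalues i := fun i ↦ by
    rcases eq_or_ne i i₀ with rfl | hi
    exacts [le_rfl, hneg.le.trans (hnonneg i hi)]
  set φ : V → ℝ := ⇑(hH.eigenvectorBasis i₀)
  have hφ0 : φ ≠ 0 := fun h ↦
    hH.eigenvectorBasis.orthonormal.ne_zero i₀ (WithLp.ofLp_injective 2 h)
  have hφ : M *ᵥ φ = hH.eigenvalues i₀ • φ := hH.mulVec_eigenvectorBasis i₀
  have habs : M *ᵥ |φ| = hH.eigenvalues i₀ • |φ| := by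
    refine hH.mulVec_eq_smul_of_dotProduct_mulVec_eq hmin (le_antisymm ?_
      (hH.eigenvalue_mul_dotProduct_self_le hmin _))
    calc |φ| ⬝ᵥ M *ᵥ |φ| ≤ φ ⬝ᵥ M *ᵥ φ := dotProduct_mulVec_abs_le (fun _ _ ↦ hM.apply_nonpos) φ
      _ = hH.eigenvalues i₀ * (|φ| ⬝ᵥ |φ|) := by
        rw [hφ, dotProduct_smul, smul_eq_mul]
        simp [dotProduct, abs_mul_abs_self]
  have habs0 : |φ| ≠ 0 := by simpa using hφ0
  refine ⟨|φ|, hM.pos_of_mulVec_eq_smul hG (abs_nonneg φ) habs0 habs, fun y hy ↦ ?_⟩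
  have hsimple : ∀ i ≠ i₀, hH.eigenvalues i ≠ hH.eigenvalues i₀ := fun i hi ↦
    (hneg.trans_le (hnonneg i hi)).ne'
  exact hH.dotProduct_mulVec_nonneg_of_repr_eq_zero hnonneg
    (hH.repr_eq_zero_of_dotProduct_eq_zero hsimple habs habs0 hy)

variable {x : V → ℝ} {A C : Set V} {v : V}

lemma isSymm (hM : CdVMatrix G M) : M.IsSymm := isHermitian_iff_isSymm.mp hM.herm

lemma mulVec_apply_eq_zero (hM : CdVMatrix G M) {y : V → ℝ}
    (h : ∀ u, y u ≠ 0 → u ≠ v ∧ ¬G.Adj v u) : (M *ᵥ y) v = 0 := by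
  refine Finset.sum_eq_zero fun u _ ↦ ?_
  by_cases hu : y u = 0
  · simp [hu]
  · simp [hM.nonedge_zero v u (h u hu).1.symm (h u hu).2]

lemma mulVec_indicator_apply_eq_zero_of_notMem (hM : CdVMatrix G M)
    (hC : G.IsAdjClosedIn A C) (hvA : v ∈ A) (hvC : v ∉ C) : (M *ᵥ C.indicator x) v = 0 :=
  hM.mulVec_apply_eq_zero fun u hu ↦
    have huC := Set.mem_of_indicator_ne_zero hu
    ⟨ne_of_mem_of_not_mem huC hvC, fun h ↦ hvC (hC.2 u huC v hvA h.symm)⟩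

lemma mulVec_indicator_apply_eq_zero (hM : CdVMatrix G M) (hker : M *ᵥ x = 0)
    (hC : G.IsAdjClosedIn (supp x) C) (hv : v ∈ supp x) : (M *ᵥ C.indicator x) v = 0 := by
  by_cases hvC : v ∈ C
  · rw [mulVec_indicator_apply_eq_neg hker, neg_eq_zero]
    refine hM.mulVec_apply_eq_zero fun u hu ↦ ?_
    have huC : u ∉ C := Set.mem_of_indicator_ne_zero hu
    exact ⟨(ne_of_mem_of_not_mem hvC huC).symm, fun h ↦ huC (hC.2 v hvC u
      (Set.indicator_apply_ne_zero.mp hu).2 h)⟩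
  · exact hM.mulVec_indicator_apply_eq_zero_of_notMem hC hv hvC

lemma indicator_dotProduct_mulVec_indicator_eq_zero (hM : CdVMatrix G M) (hker : M *ᵥ x = 0)
    (hC : G.IsAdjClosedIn (supp x) C) (D : Set V) : D.indicator x ⬝ᵥ M *ᵥ C.indicator x = 0 := by
  refine Finset.sum_eq_zero fun v _ ↦ ?_
  by_cases hv : x v = 0
  · simp [hv]
  · rw [hM.mulVec_indicator_apply_eq_zero hker hC hv, mul_zero]

lemma apply_mul_compl_indicator_nonneg (hM : CdVMatrix G M)
    (hC : G.IsAdjClosedIn (posSupp x) C) (hv : v ∈ C) (u : V) :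
    0 ≤ M v u * Cᶜ.indicator x u := by
  by_cases huC : u ∈ C
  · simp [huC]
  rw [Set.indicator_of_mem (show u ∈ Cᶜ from huC)]
  rcases lt_trichotomy (x u) 0 with hneg | hzero | hpos
  · have hvu : v ≠ u := fun h ↦ lt_asymm (hC.1 hv) (h ▸ hneg)
    exact mul_nonneg_of_nonpos_of_nonpos (hM.apply_nonpos hvu) hneg.le
  · simp [hzero]
  · have hnadj : ¬G.Adj v u := fun h ↦ huC (hC.2 v hv u hpos h)
    rw [hM.nonedge_zero v u (ne_of_mem_of_not_mem hv huC) hnadj, zero_mul]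

lemma mulVec_indicator_apply_nonpos (hM : CdVMatrix G M) (hker : M *ᵥ x = 0)
    (hC : G.IsAdjClosedIn (posSupp x) C) (hv : v ∈ C) : (M *ᵥ C.indicator x) v ≤ 0 := by
  rw [mulVec_indicator_apply_eq_neg hker, neg_nonpos]
  exact Finset.sum_nonneg fun u _ ↦ hM.apply_mul_compl_indicator_nonneg hC hv u

lemma mulVec_indicator_apply_neg (hM : CdVMatrix G M) (hker : M *ᵥ x = 0)
    (hC : G.IsAdjClosedIn (posSupp x) C) (hv : v ∈ C) {w : V} (hw : w ∈ negSupp x)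
    (hadj : G.Adj v w) : (M *ᵥ C.indicator x) v < 0 := by
  rw [mulVec_indicator_apply_eq_neg hker, neg_lt_zero]
  have hwC : w ∈ Cᶜ := fun h ↦ lt_asymm (show 0 < x w from hC.1 h) hw
  refine Finset.sum_pos' (fun u _ ↦ hM.apply_mul_compl_indicator_nonneg hC hv u)
    ⟨w, Finset.mem_univ w, ?_⟩
  rw [Set.indicator_of_mem hwC]
  exact mul_pos_of_neg_of_neg (hM.edge_neg v w hadj) hw

lemma indicator_dotProduct_mulVec_indicator_nonpos (hM : CdVMatrix G M) (hker : M *ᵥ x = 0)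
    (hC : G.IsAdjClosedIn (posSupp x) C) : C.indicator x ⬝ᵥ M *ᵥ C.indicator x ≤ 0 := by
  refine Finset.sum_nonpos fun v _ ↦ ?_
  by_cases hv : v ∈ C
  · rw [Set.indicator_of_mem hv]
    exact mul_nonpos_of_nonneg_of_nonpos (hC.1 hv).le (hM.mulVec_indicator_apply_nonpos hker hC hv)
  · simp [hv]

lemma mulVec_indicator_apply_eq_zero_iff_of_subset_posSupp (hM : CdVMatrix G M)
    (hC : C ⊆ posSupp x) (hv : v ∉ C) :
    (M *ᵥ C.indicator x) v = 0 ↔ ∀ u ∈ C, ¬G.Adj v u := by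
  have hterm : ∀ u ∈ Finset.univ, M v u * C.indicator x u ≤ 0 := fun u _ ↦ by
    by_cases hu : u ∈ C
    · rw [Set.indicator_of_mem hu]
      exact mul_nonpos_of_nonpos_of_nonneg (hM.apply_nonpos (ne_of_mem_of_not_mem hu hv).symm)
        (hC hu).le
    · simp [hu]
  change ∑ u, M v u * C.indicator x u = 0 ↔ _
  rw [Finset.sum_eq_zero_iff_of_nonpos hterm]
  refine ⟨fun h u hu hadj ↦ ?_, fun h u _ ↦ ?_⟩
  · have := h u (Finset.mem_univ u)
    rw [Set.indicator_of_mem hu] at this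
    exact (mul_neg_of_neg_of_pos (hM.edge_neg v u hadj) (hC hu)).ne this
  · by_cases hu : u ∈ C
    · rw [hM.nonedge_zero v u (ne_of_mem_of_not_mem hu hv).symm (h u hu), zero_mul]
    · simp [hu]

lemma mulVec_indicator_apply_eq_zero_iff (hM : CdVMatrix G M)
    (hC : C ⊆ posSupp x ∨ C ⊆ negSupp x) (hv : v ∉ C) :
    (M *ᵥ C.indicator x) v = 0 ↔ ∀ u ∈ C, ¬G.Adj v u := by
  rcases hC with hC | hC
  · exact hM.mulVec_indicator_apply_eq_zero_iff_of_subset_posSupp hC hv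
  · have := hM.mulVec_indicator_apply_eq_zero_iff_of_subset_posSupp (x := -x)
      (fun u hu ↦ show 0 < -x u from neg_pos.mpr (hC hu)) hv
    rwa [Set.indicator_neg', mulVec_neg, Pi.neg_apply, neg_eq_zero] at this

theorem not_adj_posSupp_negSupp (hM : CdVMatrix G M) (hker : M *ᵥ x = 0) {ψ : V → ℝ}
    (hψpos : ∀ v, 0 < ψ v)
    (hψ : ∀ y, ψ ⬝ᵥ y = 0 → 0 ≤ y ⬝ᵥ M *ᵥ y ∧ (y ⬝ᵥ M *ᵥ y = 0 → M *ᵥ y = 0))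
    (hbroken : ¬(G.induce (posSupp x)).Connected) :
    ∀ u ∈ posSupp x, ∀ w ∈ negSupp x, ¬G.Adj u w := by
  intro u hu w hw hadj
  obtain ⟨C, hC, huC, hrest⟩ := SimpleGraph.exists_isAdjClosedIn_of_not_connected hbroken hu
  have hcross : C.indicator x ⬝ᵥ M *ᵥ (posSupp x \ C).indicator x = 0 := by
    refine Finset.sum_eq_zero fun v _ ↦ ?_
    by_cases hv : v ∈ C
    · rw [hM.mulVec_indicator_apply_eq_zero_of_notMem hC.diff (hC.1 hv) fun h ↦ h.2 hv, mul_zero]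
    · simp [hv]
  have hMu := congrFun (hM.isSymm.mulVec_smul_sub_smul_eq_zero hψ
    (hM.indicator_dotProduct_mulVec_indicator_nonpos hker hC)
    (hM.indicator_dotProduct_mulVec_indicator_nonpos hker hC.diff) hcross) u
  rw [mulVec_sub, mulVec_smul, mulVec_smul, Pi.sub_apply, Pi.smul_apply, Pi.smul_apply,
    hM.mulVec_indicator_apply_eq_zero_of_notMem hC.diff hu fun h ↦ h.2 huC, smul_zero,
    sub_zero, Pi.zero_apply, smul_eq_mul] at hMu
  exact (mul_neg_of_pos_of_neg (dotProduct_indicator_pos hψpos sdiff_subset hrest)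
    (hM.mulVec_indicator_apply_neg hker hC huC hw hadj)).ne hMu

theorem nbhd_eq_nbhd_supp (hM : CdVMatrix G M) (hker : M *ᵥ x = 0) {ψ : V → ℝ}
    (hψpos : ∀ v, 0 < ψ v)
    (hψ : ∀ y, ψ ⬝ᵥ y = 0 → 0 ≤ y ⬝ᵥ M *ᵥ y ∧ (y ⬝ᵥ M *ᵥ y = 0 → M *ᵥ y = 0))
    (hno : ∀ u ∈ posSupp x, ∀ w ∈ negSupp x, ¬G.Adj u w) (hC : IsComponentOf G (supp x) C) :
    nbhd G C = nbhd G (supp x) := by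
  obtain ⟨K, rfl⟩ := hC
  refine (SimpleGraph.isAdjClosedIn_image_supp K).nbhd_subset.antisymm ?_
  rintro v ⟨hvs, u, hus, hadj⟩
  set K' := (G.induce (supp x)).connectedComponentMk ⟨u, hus⟩
  have hu' : u ∈ Subtype.val '' K'.supp := ⟨⟨u, hus⟩, rfl, rfl⟩
  have hclosed := SimpleGraph.isAdjClosedIn_image_supp (G := G) (A := supp x)
  have hnotin : ∀ K : (G.induce (supp x)).ConnectedComponent, v ∉ Subtype.val '' K.supp :=
    fun K h ↦ hvs ((hclosed K).1 h)
  have hMv := congrFun (hM.isSymm.mulVec_smul_sub_smul_eq_zero hψ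
    (hM.indicator_dotProduct_mulVec_indicator_eq_zero hker (hclosed K) _).le
    (hM.indicator_dotProduct_mulVec_indicator_eq_zero hker (hclosed K') _).le
    (hM.indicator_dotProduct_mulVec_indicator_eq_zero hker (hclosed K') _)) v
  rw [mulVec_sub, mulVec_smul, mulVec_smul, Pi.sub_apply, Pi.smul_apply, Pi.smul_apply,
    Pi.zero_apply, smul_eq_mul, smul_eq_mul, sub_eq_zero] at hMv
  have hK'v : (M *ᵥ (Subtype.val '' K'.supp).indicator x) v ≠ 0 := fun h ↦
    (hM.mulVec_indicator_apply_eq_zero_iff (image_supp_subset_posSupp_or_negSupp hno K')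
      (hnotin K')).mp h u hu' hadj.symm
  have hKv : (M *ᵥ (Subtype.val '' K.supp).indicator x) v ≠ 0 := by
    intro h
    rw [h, mul_zero, eq_comm, mul_eq_zero] at hMv
    exact hMv.elim (dotProduct_indicator_ne_zero hψpos
      (image_supp_subset_posSupp_or_negSupp hno K) (K.nonempty_supp.image _)) hK'v
  obtain ⟨u', hu'K, hadj'⟩ : ∃ u' ∈ Subtype.val '' K.supp, G.Adj v u' := by
    by_contra! h
    exact hKv ((hM.mulVec_indicator_apply_eq_zero_iff (image_supp_subset_posSupp_or_negSupp hno K)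
      (hnotin K)).mpr h)
  exact ⟨hnotin K, u', hu'K, hadj'.symm⟩

end CdVMatrix

theorem stmt17_general (G : SimpleGraph V) (hG : G.Connected) (M : Matrix V V ℝ)
    (hM : CdVMatrix G M) (x : V → ℝ) (hker : M.mulVec x = 0)
    (hbroken : ¬ (G.induce (posSupp x)).Connected) :
    (∀ C : Set V, IsComponentOf G (supp x) C → nbhd G C = nbhd G (supp x)) ∧
    (∀ u ∈ posSupp x, ∀ v ∈ negSupp x, ¬ G.Adj u v) := by
  obtain ⟨ψ, hψpos, hψ⟩ := hM.exists_pos_groundState hG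
  have hno := hM.not_adj_posSupp_negSupp hker hψpos hψ hbroken
  exact ⟨fun C hC ↦ hM.nbhd_eq_nbhd_supp hker hψpos hψ hno hC, hno⟩

/-- for `M ∈ M(G)` with `G` connected and a nonzero kernel vector `x`
with `G[supp₊(x)]` disconnected, every component `C` of `G[supp(x)]` has
`N(C) = N(supp(x))`, and there is no edge between `supp₊(x)` and `supp₋(x)`. -/
theorem stmt17 (G : SimpleGraph V) (hG : G.Connected) (M : Matrix V V ℝ)
    (hM : CdVMatrix G M) (x : V → ℝ) (hker : M.mulVec x = 0) (hx0 : x ≠ 0)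
    (hbroken : ¬ (G.induce (posSupp x)).Connected) :
    (∀ C : Set V, IsComponentOf G (supp x) C → nbhd G C = nbhd G (supp x)) ∧
    (∀ u ∈ posSupp x, ∀ v ∈ negSupp x, ¬ G.Adj u v) :=
  stmt17_general G hG M hM x hker hbroken
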